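/- arXiv:1610.02962 — 2 statements merged into one kernel-verified Lean document; each statement's English description precedes it below -/
import Mathlib

section
/- Let λ₁ ≥ λ₂ ≥ … ≥ λ_m be the eigenvalues, in non-increasing order, of the symmetric positive semidefinite matrix Zᵀ·Z ∈ ℝ^{m×m}. Then the optimal approximation error satisfies: min over A ∈ ℝ^{n×n} with rank(A) ≤ k of ‖Y − A·X‖_F² = (λ_{k+1} + λ_{k+2} + … + λ_m) + ‖Y·(I_m − Π)‖_F² (the error characterisation of Theorem 4.1, with the squared singular values of Z realised as the eigenvalues of ZᵀZ). -/
open Matrix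

noncomputable def frobNorm {p q : ℕ} (A : Matrix (Fin p) (Fin q) ℝ) : ℝ :=
  Real.sqrt (∑ i, ∑ j, (A i j) ^ 2)

/-!
Write `Π = G X` and `Z = Y Π`. Since `Π` is an orthogonal projection with `X Π = X`, Pythagoras
splits `‖Y - A X‖²` into `‖Z - A X‖² + ‖Y (1 - Π)‖²`, so everything reduces to the
Eckart–Young theorem for `Z`. If `C` has rank at most `k` and `P` is the orthogonal projection
onto its column space, then `‖Z - C‖² ≥ ‖(1 - P) Z‖² = tr ZᵀZ - tr ZᵀPZ`. In the eigenbasis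
`W = Z U` one has `tr ZᵀPZ = ∑ μᵢ cᵢ` with weights `0 ≤ cᵢ ≤ 1` of total mass at most
`tr P ≤ k`, and such a sum is at most `μ₀ + ⋯ + μ_{k-1}` because `μ` is non-increasing.
Equality is attained by `A = B G`, where `B` keeps only the first `k` columns of `Z U` (in that
basis): then `A X = B Π` and `‖Z - B Π‖ = ‖(Z - B) Π‖ ≤ ‖Z - B‖`.
-/

open Finset

namespace Matrix

variable {ι κ : Type*} [Fintype ι]

lemma diag_transpose_mul_self_nonneg (M : Matrix ι κ ℝ) (j : κ) : 0 ≤ (Mᵀ * M) j j :=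
  sum_nonneg fun _ _ => mul_self_nonneg _

lemma isStarProjection_iff_transpose {P : Matrix ι ι ℝ} :
    IsStarProjection P ↔ P * P = P ∧ Pᵀ = P := by
  rw [isStarProjection_iff', star_eq_conjTranspose, conjTranspose_eq_transpose_of_trivial]

namespace IsStarProjection

variable {P Q : Matrix ι ι ℝ}

lemma transpose_eq (hP : IsStarProjection P) : Pᵀ = P :=
  (isStarProjection_iff_transpose.1 hP).2

lemma transpose_mul_mul_eq (hP : IsStarProjection P) (M : Matrix ι κ ℝ) :
    Mᵀ * P * M = (P * M)ᵀ * (P * M) := by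
  rw [transpose_mul, hP.transpose_eq, ← Matrix.mul_assoc, Matrix.mul_assoc Mᵀ P P,
    hP.isIdempotentElem.eq]

variable [DecidableEq ι]

lemma diag_transpose_mul_mul_le (hP : IsStarProjection P) (M : Matrix ι κ ℝ) (j : κ) :
    (Mᵀ * P * M) j j ≤ (Mᵀ * M) j j := by
  have hsplit : Mᵀ * M = Mᵀ * P * M + Mᵀ * (1 - P) * M := by
    rw [← Matrix.add_mul, ← Matrix.mul_add, add_sub_cancel, Matrix.mul_one]
  have := diag_transpose_mul_self_nonneg ((1 - P) * M) j
  rw [← hP.one_sub.transpose_mul_mul_eq] at this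
  rw [hsplit, add_apply]
  linarith

lemma trace_transpose_mul_mul_le [Fintype κ] (hP : IsStarProjection P) (M : Matrix ι κ ℝ) :
    (Mᵀ * P * M).trace ≤ (Mᵀ * M).trace :=
  sum_le_sum fun j _ => hP.diag_transpose_mul_mul_le M j

lemma trace_mul_le (hP : IsStarProjection P) (hQ : IsStarProjection Q) :
    (P * Q).trace ≤ P.trace :=
  calc (P * Q).trace = (Pᵀ * Q * P).trace := by
        rw [hP.transpose_eq, trace_mul_comm (P * Q) P, ← Matrix.mul_assoc, hP.isIdempotentElem.eq]
    _ ≤ (Pᵀ * P).trace := hQ.trace_transpose_mul_mul_le P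
    _ = P.trace := by rw [hP.transpose_eq, hP.isIdempotentElem.eq]

end IsStarProjection

lemma trace_transpose_mul_mul_of_mul_transpose_eq_one [DecidableEq ι] [Fintype κ]
    {V : Matrix ι κ ℝ} (hV : V * Vᵀ = 1) (A : Matrix ι ι ℝ) : (Vᵀ * A * V).trace = A.trace := by
  rw [Matrix.mul_assoc, trace_mul_comm, Matrix.mul_assoc, hV, Matrix.mul_one]

-- `μ⁻¹` has `0⁻¹ = 0` in the directions where `μ` vanishes, so this is the projection onto the
-- column space of `W`.
lemma isStarProjection_mul_diagonal_inv_mul_transpose [Fintype κ] [DecidableEq κ]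
    {W : Matrix ι κ ℝ} {μ : κ → ℝ} (hW : Wᵀ * W = diagonal μ) :
    IsStarProjection (W * diagonal μ⁻¹ * Wᵀ) := by
  refine isStarProjection_iff_transpose.2 ⟨?_, ?_⟩
  · have hinv : diagonal μ⁻¹ * diagonal μ * diagonal μ⁻¹ = diagonal μ⁻¹ := by
      simp only [diagonal_mul_diagonal]
      congr 1
      funext j
      by_cases h : μ j = 0 <;> simp [h]
    calc W * diagonal μ⁻¹ * Wᵀ * (W * diagonal μ⁻¹ * Wᵀ)
        = W * (diagonal μ⁻¹ * (Wᵀ * W) * diagonal μ⁻¹) * Wᵀ := by simp only [Matrix.mul_assoc]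
      _ = W * diagonal μ⁻¹ * Wᵀ := by rw [hW, hinv, Matrix.mul_assoc]
  · rw [transpose_mul, transpose_mul, diagonal_transpose, transpose_transpose, Matrix.mul_assoc]

end Matrix

lemma frobNorm_sq {p q : ℕ} (A : Matrix (Fin p) (Fin q) ℝ) : frobNorm A ^ 2 = (Aᵀ * A).trace := by
  rw [frobNorm, Real.sq_sqrt (by positivity), sum_comm]
  simp only [trace, diag_apply, mul_apply, transpose_apply, sq]

section Frobenius

variable {p q : ℕ} {P : Matrix (Fin q) (Fin q) ℝ}

lemma IsStarProjection.frobNorm_mul_sq (hP : IsStarProjection P) (M : Matrix (Fin p) (Fin q) ℝ) :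
    frobNorm (M * P) ^ 2 = (M * P * Mᵀ).trace := by
  rw [frobNorm_sq, transpose_mul, hP.transpose_eq, trace_mul_comm, Matrix.mul_assoc,
    ← Matrix.mul_assoc P, hP.isIdempotentElem.eq, Matrix.mul_assoc]

lemma IsStarProjection.frobNorm_sq_eq_add (hP : IsStarProjection P)
    (M : Matrix (Fin p) (Fin q) ℝ) :
    frobNorm M ^ 2 = frobNorm (M * P) ^ 2 + frobNorm (M * (1 - P)) ^ 2 := by
  rw [hP.frobNorm_mul_sq, hP.one_sub.frobNorm_mul_sq, ← trace_add, ← Matrix.add_mul,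
    ← Matrix.mul_add, add_sub_cancel, Matrix.mul_one, frobNorm_sq, trace_mul_comm]

lemma IsStarProjection.frobNorm_mul_sq_le (hP : IsStarProjection P)
    (M : Matrix (Fin p) (Fin q) ℝ) : frobNorm (M * P) ^ 2 ≤ frobNorm M ^ 2 := by
  rw [hP.frobNorm_sq_eq_add M]
  exact le_add_of_nonneg_right (sq_nonneg _)

lemma IsStarProjection.frobNorm_sub_mul_sq (hP : IsStarProjection P) {n : ℕ}
    {X : Matrix (Fin n) (Fin q) ℝ} (hXP : X * P = X) (Y : Matrix (Fin p) (Fin q) ℝ)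
    (A : Matrix (Fin p) (Fin n) ℝ) :
    frobNorm (Y - A * X) ^ 2 = frobNorm (Y * P - A * X) ^ 2 + frobNorm (Y * (1 - P)) ^ 2 := by
  have hX : X * (1 - P) = 0 := by rw [Matrix.mul_sub, Matrix.mul_one, hXP, sub_self]
  rw [hP.frobNorm_sq_eq_add (Y - A * X), Matrix.sub_mul, Matrix.sub_mul, Matrix.mul_assoc A X P,
    hXP, Matrix.mul_assoc A X, hX, Matrix.mul_zero, sub_zero]

end Frobenius

lemma Matrix.exists_isStarProjection_trace_eq_rank_mul_eq {n m : ℕ}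
    (C : Matrix (Fin n) (Fin m) ℝ) :
    ∃ P : Matrix (Fin n) (Fin n) ℝ, IsStarProjection P ∧ P.trace = C.rank ∧ P * C = C := by
  set K := LinearMap.range (toEuclideanLin C)
  set P := (toEuclideanCLM (𝕜 := ℝ) (n := Fin n)).symm K.starProjection with hP
  have hPK : toEuclideanCLM (𝕜 := ℝ) P = K.starProjection := by simp [hP]
  refine ⟨P, ?_, ?_, ?_⟩
  · have h := isStarProjection_starProjection (U := K)
    rw [← hPK] at h
    have hinj := EquivLike.injective (toEuclideanCLM (𝕜 := ℝ) (n := Fin n))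
    exact ⟨hinj (by rw [map_mul]; exact h.1), hinj (by rw [map_star]; exact h.2)⟩
  · have htr := (LinearMap.IsIdempotentElem.isProj_range _
      (ContinuousLinearMap.IsIdempotentElem.toLinearMap K.isIdempotentElem_starProjection)).trace
    rw [K.range_starProjection, ← hPK, coe_toEuclideanCLM_eq_toEuclideanLin,
      toEuclideanLin_eq_toLin_orthonormal, trace_toLin_eq] at htr
    rw [rank_eq_finrank_range_toLin C (EuclideanSpace.basisFun _ ℝ).toBasis
      (EuclideanSpace.basisFun _ ℝ).toBasis, htr]
    rfl
  · refine ext_iff_mulVec.2 fun v => ?_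
    have hCv : WithLp.toLp 2 (C *ᵥ v) ∈ K := ⟨WithLp.toLp 2 v, rfl⟩
    have hfix := K.starProjection_eq_self_iff.2 hCv
    rw [← hPK] at hfix
    simpa [← mulVec_mulVec] using congrArg WithLp.ofLp hfix

lemma Antitone.sum_mul_le_sum_filter_lt {m k : ℕ} {μ c : Fin m → ℝ} (hμ : Antitone μ)
    (hμ0 : ∀ i, 0 ≤ μ i) (hc0 : ∀ i, 0 ≤ c i) (hc1 : ∀ i, c i ≤ 1) (hc : ∑ i, c i ≤ k) :
    ∑ i : Fin m, μ i * c i ≤ ∑ i ∈ univ.filter (fun i : Fin m => (i : ℕ) < k), μ i := by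
  rcases lt_or_ge k m with hkm | hmk
  · set τ := μ ⟨k, hkm⟩
    have hterm : ∀ i : Fin m, μ i * c i ≤
        (if (i : ℕ) < k then μ i else 0) + τ * (c i - if (i : ℕ) < k then 1 else 0) := by
      intro i
      split_ifs with hi
      · have : τ ≤ μ i := hμ (Fin.le_def.2 hi.le)
        nlinarith [hc1 i]
      · have : μ i ≤ τ := hμ (Fin.le_def.2 (not_lt.1 hi))
        nlinarith [hc0 i]
    have hcard : (univ.filter fun i : Fin m => (i : ℕ) < k).card = k := by
      rw [Fin.card_filter_val_lt, min_eq_right hkm.le]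
    calc ∑ i, μ i * c i
        ≤ ∑ i : Fin m,
            ((if (i : ℕ) < k then μ i else 0) + τ * (c i - if (i : ℕ) < k then 1 else 0)) :=
          sum_le_sum fun i _ => hterm i
      _ = ∑ i ∈ univ.filter (fun i : Fin m => (i : ℕ) < k), μ i + τ * (∑ i, c i - k) := by
          rw [sum_add_distrib, ← mul_sum, sum_sub_distrib, ← sum_filter, sum_boole, hcard]
      _ ≤ ∑ i ∈ univ.filter (fun i : Fin m => (i : ℕ) < k), μ i := by nlinarith [hμ0 ⟨k, hkm⟩]
  · rw [filter_true_of_mem fun i _ => i.2.trans_le hmk]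
    exact sum_le_sum fun i _ => mul_le_of_le_one_right (hμ0 i) (hc1 i)

section EckartYoung

variable {n m k : ℕ}

-- `d i / μ i` is the weight of the `i`-th eigendirection captured by `P`; the weights lie in
-- `[0, 1]` and add up to `tr (P Q) ≤ tr P` for the projection `Q = W diag(μ⁻¹) Wᵀ`.
lemma IsStarProjection.trace_transpose_mul_mul_le_sum_filter_lt {W : Matrix (Fin n) (Fin m) ℝ}
    {μ : Fin m → ℝ} (hW : Wᵀ * W = diagonal μ) (hμ : Antitone μ)
    {P : Matrix (Fin n) (Fin n) ℝ} (hP : IsStarProjection P) (hPk : P.trace ≤ k) :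
    (Wᵀ * P * W).trace ≤ ∑ i ∈ univ.filter (fun i : Fin m => (i : ℕ) < k), μ i := by
  set d : Fin m → ℝ := fun i => (Wᵀ * P * W) i i
  have hd0 : ∀ i, 0 ≤ d i := fun i => by
    simpa only [d, hP.transpose_mul_mul_eq W] using diag_transpose_mul_self_nonneg (P * W) i
  have hdμ : ∀ i, d i ≤ μ i := fun i => by
    simpa [hW] using hP.diag_transpose_mul_mul_le W i
  have hμ0 : ∀ i, 0 ≤ μ i := fun i => (hd0 i).trans (hdμ i)
  have hweights : ∑ i, d i / μ i ≤ k :=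
    calc ∑ i, d i / μ i = (Wᵀ * P * W * diagonal μ⁻¹).trace := by
          simp [trace, d, div_eq_mul_inv]
      _ = (P * (W * diagonal μ⁻¹ * Wᵀ)).trace := by
          rw [Matrix.mul_assoc (Wᵀ * P) W, Matrix.mul_assoc Wᵀ P, trace_mul_comm Wᵀ,
            Matrix.mul_assoc P (W * diagonal μ⁻¹)]
      _ ≤ P.trace := hP.trace_mul_le (isStarProjection_mul_diagonal_inv_mul_transpose hW)
      _ ≤ k := hPk
  have hd : ∀ i, μ i * (d i / μ i) = d i := fun i => by
    rcases (hμ0 i).eq_or_lt with h | h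
    · have hdi : d i = 0 := le_antisymm (h ▸ hdμ i) (hd0 i)
      rw [← h, hdi, zero_mul]
    · exact mul_div_cancel₀ _ h.ne'
  calc (Wᵀ * P * W).trace = ∑ i, μ i * (d i / μ i) := by simp only [hd]; rfl
    _ ≤ _ := hμ.sum_mul_le_sum_filter_lt hμ0 (fun i => div_nonneg (hd0 i) (hμ0 i))
        (fun i => div_le_one_of_le₀ (hdμ i) (hμ0 i)) hweights

variable {Z : Matrix (Fin n) (Fin m) ℝ} {μ : Fin m → ℝ} {U : Matrix (Fin m) (Fin m) ℝ}

lemma transpose_mul_mul_self_mul_eq_diagonal (hU : Uᵀ * U = 1)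
    (hZ : Zᵀ * Z = U * diagonal μ * Uᵀ) : (Z * U)ᵀ * (Z * U) = diagonal μ := by
  rw [transpose_mul, Matrix.mul_assoc, ← Matrix.mul_assoc Zᵀ, hZ]
  simp only [Matrix.mul_assoc, hU, Matrix.mul_one]
  rw [← Matrix.mul_assoc, hU, Matrix.one_mul]

lemma sum_filter_le_frobNorm_sub_sq (hU : Uᵀ * U = 1) (hZ : Zᵀ * Z = U * diagonal μ * Uᵀ)
    (hμ : Antitone μ) {C : Matrix (Fin n) (Fin m) ℝ} (hC : C.rank ≤ k) :
    ∑ i ∈ univ.filter (fun i : Fin m => k ≤ (i : ℕ)), μ i ≤ frobNorm (Z - C) ^ 2 := by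
  obtain ⟨P, hP, hPC_tr, hPC⟩ := exists_isStarProjection_trace_eq_rank_mul_eq C
  have hUU : U * Uᵀ = 1 := mul_eq_one_comm.mp hU
  have hW := transpose_mul_mul_self_mul_eq_diagonal hU hZ
  have hhead := hP.trace_transpose_mul_mul_le_sum_filter_lt hW hμ
    (k := k) (by rw [hPC_tr]; exact_mod_cast hC)
  have hconj : ((Z * U)ᵀ * P * (Z * U)).trace = (Zᵀ * P * Z).trace := by
    rw [transpose_mul, show Uᵀ * Zᵀ * P * (Z * U) = Uᵀ * (Zᵀ * P * Z) * U by
      simp only [Matrix.mul_assoc], trace_transpose_mul_mul_of_mul_transpose_eq_one hUU]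
  have htotal : (Zᵀ * Z).trace = ∑ i, μ i := by
    rw [hZ, trace_mul_comm, ← Matrix.mul_assoc, hU, Matrix.one_mul, trace_diagonal]
  have hsplit := sum_filter_add_sum_filter_not univ (fun i : Fin m => (i : ℕ) < k) μ
  simp only [not_lt] at hsplit
  have hres : (1 - P) * (Z - C) = (1 - P) * Z := by
    rw [Matrix.mul_sub, Matrix.sub_mul 1 P C, Matrix.one_mul, hPC, sub_self, sub_zero]
  calc ∑ i ∈ univ.filter (fun i : Fin m => k ≤ (i : ℕ)), μ i
      ≤ (Zᵀ * Z).trace - (Zᵀ * P * Z).trace := by rw [← hconj]; linarith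
    _ = ((Z - C)ᵀ * (1 - P) * (Z - C)).trace := by
        rw [hP.one_sub.transpose_mul_mul_eq, hres, ← hP.one_sub.transpose_mul_mul_eq,
          Matrix.mul_sub, Matrix.sub_mul, Matrix.mul_one, trace_sub]
    _ ≤ frobNorm (Z - C) ^ 2 := by
        rw [frobNorm_sq]; exact hP.one_sub.trace_transpose_mul_mul_le _

lemma exists_rank_le_frobNorm_sub_sq_eq (hU : Uᵀ * U = 1) (hZ : Zᵀ * Z = U * diagonal μ * Uᵀ)
    (k : ℕ) : ∃ B : Matrix (Fin n) (Fin m) ℝ, B.rank ≤ k ∧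
      frobNorm (Z - B) ^ 2 = ∑ i ∈ univ.filter (fun i : Fin m => k ≤ (i : ℕ)), μ i := by
  have hUU : U * Uᵀ = 1 := mul_eq_one_comm.mp hU
  have hW := transpose_mul_mul_self_mul_eq_diagonal hU hZ
  set D : Matrix (Fin m) (Fin m) ℝ := diagonal fun i => if (i : ℕ) < k then 1 else 0
  refine ⟨Z * U * D * Uᵀ, ?_, ?_⟩
  · refine (rank_mul_le_left _ _).trans <| (rank_mul_le_right _ _).trans ?_
    rw [rank_diagonal, Fintype.card_subtype]
    simpa using (Fin.card_filter_val_lt (n := m) (m := k)).le.trans (min_le_right m k)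
  · have hsub : Z - Z * U * D * Uᵀ = Z * U * (1 - D) * Uᵀ := by
      rw [Matrix.mul_sub, Matrix.sub_mul, Matrix.mul_one, Matrix.mul_assoc Z U Uᵀ, hUU,
        Matrix.mul_one]
    have hE : 1 - D = diagonal fun i : Fin m => if k ≤ (i : ℕ) then (1 : ℝ) else 0 := by
      rw [← diagonal_one, diagonal_sub]
      congr 1
      funext i
      by_cases hi : (i : ℕ) < k <;> simp [hi, not_le.2, le_of_not_gt]
    have hUt : Uᵀ * Uᵀᵀ = 1 := by rwa [transpose_transpose]
    have hconj : (Z * U * (1 - D) * Uᵀ)ᵀ * (Z * U * (1 - D) * Uᵀ) =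
        Uᵀᵀ * ((1 - D)ᵀ * ((Z * U)ᵀ * (Z * U)) * (1 - D)) * Uᵀ := by
      simp only [transpose_mul, Matrix.mul_assoc]
    rw [hsub, frobNorm_sq, hconj, trace_transpose_mul_mul_of_mul_transpose_eq_one hUt, hW, hE,
      diagonal_transpose, diagonal_mul_diagonal, diagonal_mul_diagonal, trace_diagonal, sum_filter]
    refine sum_congr rfl fun i _ => ?_
    split_ifs <;> simp

end EckartYoung

theorem stmt_2_general (n m k : ℕ)
    (X Y : Matrix (Fin n) (Fin m) ℝ) (G : Matrix (Fin m) (Fin n) ℝ)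
    (hG1 : X * G * X = X) (hG4 : (G * X)ᵀ = G * X)
    (μ : Fin m → ℝ) (hord : ∀ i j : Fin m, i ≤ j → μ j ≤ μ i)
    (U : Matrix (Fin m) (Fin m) ℝ) (hU : Uᵀ * U = 1)
    (heig : (Y * (G * X))ᵀ * (Y * (G * X)) = U * Matrix.diagonal μ * Uᵀ) :
    sInf {e : ℝ | ∃ A : Matrix (Fin n) (Fin n) ℝ, A.rank ≤ k ∧
        e = frobNorm (Y - A * X) ^ 2} =
      (∑ i ∈ Finset.univ.filter (fun i : Fin m => k ≤ (i : ℕ)), μ i) +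
      frobNorm (Y * (1 - G * X)) ^ 2 := by
  have hXP : X * (G * X) = X := by rw [← Matrix.mul_assoc, hG1]
  have hP : IsStarProjection (G * X) :=
    isStarProjection_iff_transpose.2 ⟨by rw [Matrix.mul_assoc, hXP], hG4⟩
  have hsplit := hP.frobNorm_sub_mul_sq hXP Y
  apply le_antisymm
  · obtain ⟨B, hB, hZB⟩ := exists_rank_le_frobNorm_sub_sq_eq hU heig k
    refine csInf_le_of_le (b := frobNorm (Y - B * G * X) ^ 2) ⟨0, ?_⟩
      ⟨B * G, (rank_mul_le_left B G).trans hB, rfl⟩ ?_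
    · rintro _ ⟨A, -, rfl⟩
      positivity
    have hBP : Y * (G * X) - B * G * X = (Y * (G * X) - B) * (G * X) := by
      rw [Matrix.sub_mul, Matrix.mul_assoc Y, hP.isIdempotentElem.eq, Matrix.mul_assoc B]
    rw [hsplit, hBP, ← hZB]
    gcongr ?_ + _
    exact hP.frobNorm_mul_sq_le _
  · refine le_csInf ⟨_, 0, by simp, rfl⟩ ?_
    rintro _ ⟨A, hA, rfl⟩
    rw [hsplit]
    gcongr ?_ + _
    exact sum_filter_le_frobNorm_sub_sq hU heig hord ((rank_mul_le_left A X).trans hA)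

/-- Error characterisation of Theorem 4.1: if `μ 0 ≥ μ 1 ≥ …` are the eigenvalues of `ZᵀZ`
(realised through an orthogonal diagonalisation), then the optimal approximation error is
`∑_{i ≥ k} μ i + ‖Y (I - Π)‖_F²`, where `Π = G X` and `Z = Y Π`. -/
theorem stmt_2 (n m k : ℕ) (hk : 0 < k) (hkm : k ≤ m) (hmn : m ≤ n)
    (X Y : Matrix (Fin n) (Fin m) ℝ) (G : Matrix (Fin m) (Fin n) ℝ)
    (hG1 : X * G * X = X) (hG2 : G * X * G = G)
    (hG3 : (X * G)ᵀ = X * G) (hG4 : (G * X)ᵀ = G * X)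
    (μ : Fin m → ℝ) (hord : ∀ i j : Fin m, i ≤ j → μ j ≤ μ i)
    (U : Matrix (Fin m) (Fin m) ℝ) (hU : Uᵀ * U = 1)
    (heig : (Y * (G * X))ᵀ * (Y * (G * X)) = U * Matrix.diagonal μ * Uᵀ) :
    sInf {e : ℝ | ∃ A : Matrix (Fin n) (Fin n) ℝ, A.rank ≤ k ∧
        e = frobNorm (Y - A * X) ^ 2} =
      (∑ i ∈ Finset.univ.filter (fun i : Fin m => k ≤ (i : ℕ)), μ i) +
      frobNorm (Y * (1 - G * X)) ^ 2 :=
  stmt_2_general n m k X Y G hG1 hG4 μ hord U hU heig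
end

section
/- The objective function A ↦ ‖Y − A·X‖_F² is coercive on the subspace V = {A ∈ ℝ^{n×n} : every row of A lies in the column space of X}: for every constant C > 0 there exists R > 0 such that every A ∈ V with ‖A‖_F > R satisfies ‖Y − A·X‖_F² > C. -/
/-! On the subspace `V` of matrices whose rows lie in the column space of `X`, the linear map
`A ↦ A * X` is injective: writing `Aᵀ = X * M`, `A * X = 0` forces `A * Aᵀ = (A * X) * M = 0`.
An injective linear map on a finite-dimensional space is bounded below, `‖A‖ ≤ c * ‖A * X‖`, so
`‖Y - A * X‖ ≥ ‖A‖ / c - ‖Y‖` tends to infinity with `‖A‖`. -/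

open Matrix

namespace Matrix

variable {R : Type*} {l m n : Type*} [Fintype m]

theorem exists_eq_mul_of_range_mulVecLin_le [CommSemiring R] {p : Type*} [Fintype p] {B : Matrix n p R} {X : Matrix n m R}
    (h : LinearMap.range B.mulVecLin ≤ LinearMap.range X.mulVecLin) :
    ∃ M : Matrix m p R, B = X * M := by
  classical
  have hcol : ∀ j, ∃ v, X *ᵥ v = B.col j := fun j => by
    simpa [mulVec_single_one] using h ⟨Pi.single j 1, rfl⟩
  choose v hv using hcol
  refine ⟨(of v)ᵀ, ext fun i j => ?_⟩
  rw [← col_apply B j i, ← hv j]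
  rfl

def rowsInColumnSpace [Fintype l] [CommSemiring R] (X : Matrix n m R) :
    Submodule R (Matrix l n R) where
  carrier := {A | LinearMap.range Aᵀ.mulVecLin ≤ LinearMap.range X.mulVecLin}
  add_mem' {A B} hA hB := by
    rintro _ ⟨v, rfl⟩
    simpa [add_mulVec] using add_mem (hA ⟨v, rfl⟩) (hB ⟨v, rfl⟩)
  zero_mem' := by
    rintro _ ⟨v, rfl⟩
    simp
  smul_mem' c A hA := by
    rintro _ ⟨v, rfl⟩
    simpa [smul_mulVec] using Submodule.smul_mem _ c (hA ⟨v, rfl⟩)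

theorem mem_rowsInColumnSpace [Fintype l] [CommSemiring R] {X : Matrix n m R}
    {A : Matrix l n R} :
    A ∈ rowsInColumnSpace X ↔ LinearMap.range Aᵀ.mulVecLin ≤ LinearMap.range X.mulVecLin :=
  Iff.rfl

theorem eq_zero_of_mem_rowsInColumnSpace_of_mul_eq_zero [Fintype l] [Fintype n]
    {X : Matrix n m ℝ} {A : Matrix l n ℝ} (hA : A ∈ rowsInColumnSpace X) (h : A * X = 0) :
    A = 0 := by
  obtain ⟨M, hM⟩ := exists_eq_mul_of_range_mulVecLin_le (mem_rowsInColumnSpace.mp hA)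
  rw [← self_mul_conjTranspose_eq_zero, conjTranspose_eq_transpose_of_trivial, hM,
    ← Matrix.mul_assoc, h, Matrix.zero_mul]

end Matrix

section Coercive

variable {𝕜 E F : Type*} [NontriviallyNormedField 𝕜] [CompleteSpace 𝕜]
  [NormedAddCommGroup E] [NormedSpace 𝕜 E] [NormedAddCommGroup F] [NormedSpace 𝕜 F]

theorem LinearMap.exists_norm_le_mul_norm_of_injOn (f : E →ₗ[𝕜] F) (V : Submodule 𝕜 E)
    [FiniteDimensional 𝕜 V] (hf : ∀ x ∈ V, f x = 0 → x = 0) :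
    ∃ c > 0, ∀ x ∈ V, ‖x‖ ≤ c * ‖f x‖ := by
  have hker : LinearMap.ker (f.domRestrict V) = ⊥ :=
    LinearMap.ker_eq_bot'.mpr fun x hx => Subtype.ext (hf x x.2 hx)
  obtain ⟨K, hK, hanti⟩ := (f.domRestrict V).exists_antilipschitzWith hker
  exact ⟨K, hK, fun x hx => ZeroHomClass.bound_of_antilipschitz _ hanti ⟨x, hx⟩⟩

theorem LinearMap.exists_lt_norm_sub_sq_of_injOn (f : E →ₗ[𝕜] F) (V : Submodule 𝕜 E)
    [FiniteDimensional 𝕜 V] (hf : ∀ x ∈ V, f x = 0 → x = 0) (y : F) (C : ℝ) :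
    ∃ R > 0, ∀ x ∈ V, R < ‖x‖ → C < ‖y - f x‖ ^ 2 := by
  obtain ⟨c, hc, hbound⟩ := f.exists_norm_le_mul_norm_of_injOn V hf
  refine ⟨c * (√C + ‖y‖) + 1, by positivity, fun x hx hR => Real.lt_sq_of_sqrt_lt ?_⟩
  have hfx : √C + ‖y‖ < ‖f x‖ :=
    lt_of_mul_lt_mul_left (by linarith [hbound x hx]) hc.le
  calc √C < ‖f x‖ - ‖y‖ := by linarith
    _ ≤ ‖y - f x‖ := by rw [norm_sub_rev]; exact norm_sub_norm_le _ _

end Coercive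

attribute [local instance] Matrix.frobeniusSeminormedAddCommGroup
  Matrix.frobeniusNormedAddCommGroup Matrix.frobeniusNormedSpace

theorem frobNorm_eq_norm {p q : ℕ} (A : Matrix (Fin p) (Fin q) ℝ) : frobNorm A = ‖A‖ := by
  simp only [frobNorm, frobenius_norm_def, Real.norm_eq_abs, sq_abs, Real.rpow_two,
    Real.sqrt_eq_rpow, one_div]

theorem stmt_8_general (n m : ℕ) (X Y : Matrix (Fin n) (Fin m) ℝ) :
    ∀ C : ℝ, 0 < C → ∃ R : ℝ, 0 < R ∧
      ∀ A : Matrix (Fin n) (Fin n) ℝ,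
        LinearMap.range (Matrix.mulVecLin Aᵀ) ≤ LinearMap.range (Matrix.mulVecLin X) →
        R < frobNorm A → C < frobNorm (Y - A * X) ^ 2 := by
  intro C _
  obtain ⟨R, hR, hcoercive⟩ :=
    (mulRightLinearMap (Fin n) ℝ X).exists_lt_norm_sub_sq_of_injOn (rowsInColumnSpace X)
      (fun _ hA => eq_zero_of_mem_rowsInColumnSpace_of_mul_eq_zero hA) Y C
  refine ⟨R, hR, fun A hA hRA => ?_⟩
  rw [frobNorm_eq_norm] at hRA ⊢
  exact hcoercive A (mem_rowsInColumnSpace.mpr hA) hRA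

/-- Coercivity of `A ↦ ‖Y - A X‖_F²` on the subspace of matrices whose rows lie in the
column space of `X`. -/
theorem stmt_8 (n m : ℕ) (hn : 0 < n) (hm : 0 < m) (hmn : m ≤ n)
    (X Y : Matrix (Fin n) (Fin m) ℝ) :
    ∀ C : ℝ, 0 < C → ∃ R : ℝ, 0 < R ∧
      ∀ A : Matrix (Fin n) (Fin n) ℝ,
        LinearMap.range (Matrix.mulVecLin Aᵀ) ≤ LinearMap.range (Matrix.mulVecLin X) →
        R < frobNorm A → C < frobNorm (Y - A * X) ^ 2 :=
  stmt_8_general n m X Y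
end
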